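/- Let α, ξ ∈ F_2^n and let K ⊆ F_2^n be a binary linear code which is self-dual with respect to α and satisfies ⟨β,ξ⟩ = 0 for every β ∈ K. Then α·ξ ∈ K. In particular, if wt(α·ξ) ≡ 2 (mod 4), then K is not doubly even. -/
import Mathlib


/-- The weight of a binary vector: the number of nonzero coordinates. -/
def wt {n : ℕ} (α : Fin n → ZMod 2) : ℕ :=
  (Finset.univ.filter (fun i => α i ≠ 0)).card

/-- The standard bilinear form `⟨α,β⟩ = ∑ i, α i * β i` on `F_2^n`. -/
def ip {n : ℕ} (α β : Fin n → ZMod 2) : ZMod 2 := ∑ i, α i * β i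

/-- The support of a binary vector. -/
def supp {n : ℕ} (α : Fin n → ZMod 2) : Set (Fin n) := {i | α i ≠ 0}

/-- The support of a code: the union of the supports of its codewords. -/
def codeSupp {n : ℕ} (S : Set (Fin n → ZMod 2)) : Set (Fin n) := ⋃ h ∈ S, supp h

/-- `K^{⊥_α}`: vectors with support inside `supp α` orthogonal to every element of `K`. -/
def perpWrt {n : ℕ} (α : Fin n → ZMod 2) (K : Set (Fin n → ZMod 2)) :
    Set (Fin n → ZMod 2) :=
  {δ | supp δ ⊆ supp α ∧ ∀ k ∈ K, ip δ k = 0}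

/-- `K` is self-dual with respect to `α` if `supp K = supp α` and `K^{⊥_α} = K`. -/
def selfDualWrt {n : ℕ} (α : Fin n → ZMod 2) (K : Set (Fin n → ZMod 2)) : Prop :=
  codeSupp K = supp α ∧ perpWrt α K = K

theorem stmt10 {n : ℕ} (α ξ : Fin n → ZMod 2)
    (K : Submodule (ZMod 2) (Fin n → ZMod 2))
    (hsd : selfDualWrt α (K : Set (Fin n → ZMod 2)))
    (hperp : ∀ β ∈ K, ip β ξ = 0) :
    α * ξ ∈ K ∧ (wt (α * ξ) % 4 = 2 → ¬ (∀ x ∈ K, 4 ∣ wt x)) := by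
  have hmem : α * ξ ∈ K := by
    have : α * ξ ∈ (K : Set (Fin n → ZMod 2)) := by
      rw [← hsd.2]
      refine ⟨?_, ?_⟩
      · intro i hi
        simp only [supp, Set.mem_setOf_eq, Pi.mul_apply] at hi ⊢
        exact fun h => hi (by rw [h, zero_mul])
      · intro k hk
        have hsupp : supp k ⊆ supp α := by
          rw [← hsd.1]
          exact Set.subset_biUnion_of_mem (u := supp) hk
        have heq : ip (α * ξ) k = ip k ξ := by
          unfold ip
          apply Finset.sum_congr rfl
          intro i _
          by_cases hki : k i = 0
          · rw [hki]; ring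
          · have hai : α i ≠ 0 := hsupp hki
            rcases (by decide : ∀ a : ZMod 2, a = 0 ∨ a = 1) (α i) with h | h
            · exact absurd h hai
            · rw [Pi.mul_apply, h]; ring
        rw [heq]; exact hperp k hk
    exact this
  refine ⟨hmem, fun hwt hall => ?_⟩
  have := hall (α * ξ) hmem
  omega
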